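/- Let P be a closed partial C4-marked pregraph, let O be an orbit of deficient vertices of P under Aut(P), and let P' be an extension of P in which no vertex of O is deficient and every edge of P' not in P has nonempty intersection with O. Then P' is closed: every isomorphism between two extensions of P' induces an automorphism of P'. -/

import Mathlib

/-- The possible "ends" of an edge in a pregraph: an ordinary edge (or loop)
with two endpoints, or a semi-edge with a single endpoint. -/
inductive PEnds (V : Type) where
  | edge : V → V → PEnds V
  | semi : V → PEnds V
  deriving DecidableEq

/-- A finite pregraph: a multigraph that may contain loops, parallel edges and
semi-edges.  Edges are abstract and carry their endpoints via `ends`. -/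
structure Pregraph where
  V : Type
  E : Type
  [fintypeV : Fintype V]
  [decEqV : DecidableEq V]
  [fintypeE : Fintype E]
  [decEqE : DecidableEq E]
  ends : E → PEnds V

attribute [instance] Pregraph.fintypeV Pregraph.decEqV Pregraph.fintypeE Pregraph.decEqE

namespace Pregraph

/-- The number of end-points that edge `e` has at the vertex `v`
(a loop at `v` counts twice, a semi-edge once). -/
def endCount (P : Pregraph) (v : P.V) (e : P.E) : ℕ :=
  match P.ends e with
  | .edge a b => (if a = v then 1 else 0) + (if b = v then 1 else 0)
  | .semi a => if a = v then 1 else 0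

/-- The degree of a vertex: loops count 2, semi-edges count 1. -/
def degree (P : Pregraph) (v : P.V) : ℕ := ∑ e : P.E, P.endCount v e

open Classical in
/-- The degree of a vertex inside a set `F` of edges. -/
noncomputable def degIn (P : Pregraph) (F : Set P.E) (v : P.V) : ℕ :=
  ∑ e : P.E, if e ∈ F then P.endCount v e else 0

/-- `e` is a proper edge with endpoints `a` and `b`. -/
def joins (P : Pregraph) (e : P.E) (a b : P.V) : Prop :=
  P.ends e = .edge a b ∨ P.ends e = .edge b a

/-- The edge `e` is incident to the vertex `v`. -/
def incident (P : Pregraph) (e : P.E) (v : P.V) : Prop :=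
  match P.ends e with
  | .edge a b => a = v ∨ b = v
  | .semi a => a = v

/-- Adjacency via a proper edge. -/
def Adj (P : Pregraph) (u w : P.V) : Prop := ∃ e, P.joins e u w

/-- Connectedness of a pregraph. -/
def Connected (P : Pregraph) : Prop := ∀ u w : P.V, Relation.ReflTransGen P.Adj u w

/-- A cubic pregraph: connected and every vertex has degree 3. -/
def Cubic (P : Pregraph) : Prop := P.Connected ∧ ∀ v, P.degree v = 3

/-- The edge `e` has at least one endpoint in the vertex set `C`. -/
def touches (P : Pregraph) (e : P.E) (C : Set P.V) : Prop :=
  match P.ends e with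
  | .edge a b => a ∈ C ∨ b ∈ C
  | .semi a => a ∈ C

/-- `C` is a component of the edge set `F` of type `q₁` : a 4-cycle. -/
def IsQ1Comp (P : Pregraph) (F : Set P.E) (C : Set P.V) : Prop :=
  ∃ a b c d : P.V, a ≠ b ∧ a ≠ c ∧ a ≠ d ∧ b ≠ c ∧ b ≠ d ∧ c ≠ d ∧
    C = {a, b, c, d} ∧
    ∃ e1 e2 e3 e4 : P.E, e1 ≠ e2 ∧ e1 ≠ e3 ∧ e1 ≠ e4 ∧ e2 ≠ e3 ∧ e2 ≠ e4 ∧ e3 ≠ e4 ∧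
      {e ∈ F | P.touches e C} = {e1, e2, e3, e4} ∧
      P.joins e1 a b ∧ P.joins e2 b c ∧ P.joins e3 c d ∧ P.joins e4 d a

/-- `C` is a component of the edge set `F` of type `q₂` : a digon. -/
def IsQ2Comp (P : Pregraph) (F : Set P.E) (C : Set P.V) : Prop :=
  ∃ a b : P.V, a ≠ b ∧ C = {a, b} ∧
    ∃ e1 e2 : P.E, e1 ≠ e2 ∧ {e ∈ F | P.touches e C} = {e1, e2} ∧
      P.joins e1 a b ∧ P.joins e2 a b

/-- `C` is a component of the edge set `F` of type `q₃` : an edge together with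
a semi-edge at each endpoint. -/
def IsQ3Comp (P : Pregraph) (F : Set P.E) (C : Set P.V) : Prop :=
  ∃ a b : P.V, a ≠ b ∧ C = {a, b} ∧
    ∃ e1 e2 e3 : P.E, e1 ≠ e2 ∧ e1 ≠ e3 ∧ e2 ≠ e3 ∧
      {e ∈ F | P.touches e C} = {e1, e2, e3} ∧
      P.joins e1 a b ∧ P.ends e2 = .semi a ∧ P.ends e3 = .semi b

/-- `C` is a component of the edge set `F` of type `q₄` : a single vertex with
two semi-edges. -/
def IsQ4Comp (P : Pregraph) (F : Set P.E) (C : Set P.V) : Prop :=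
  ∃ a : P.V, C = {a} ∧
    ∃ e1 e2 : P.E, e1 ≠ e2 ∧ {e ∈ F | P.touches e C} = {e1, e2} ∧
      P.ends e1 = .semi a ∧ P.ends e2 = .semi a

/-- `C` is a component of `F` which is a quotient of `C₄`. -/
def IsCQComp (P : Pregraph) (F : Set P.E) (C : Set P.V) : Prop :=
  P.IsQ1Comp F C ∨ P.IsQ2Comp F C ∨ P.IsQ3Comp F C ∨ P.IsQ4Comp F C

/-- `F` is a `C₄`-quotient 2-factor with component partition `Ps`. -/
def IsCQFactorWith (P : Pregraph) (F : Set P.E) (Ps : Set (Set P.V)) : Prop :=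
  (∀ C ∈ Ps, P.IsCQComp F C) ∧
  (∀ v : P.V, ∃ C ∈ Ps, v ∈ C) ∧
  (∀ C ∈ Ps, ∀ D ∈ Ps, C ≠ D → Disjoint C D)

/-- `F` is a `C₄`-quotient 2-factor: a spanning subgraph in which every vertex has
degree 2 and every component is a quotient of `C₄`. -/
def IsCQFactor (P : Pregraph) (F : Set P.E) : Prop := ∃ Ps, P.IsCQFactorWith F Ps

/-- The pregraph has a `C₄`-quotient 2-factor. -/
def HasCQFactor (P : Pregraph) : Prop := ∃ F, P.IsCQFactor F

/-- Compatibility of ends under a vertex map (edges are unordered). -/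
def endsRel {V W : Type} (σ : V → W) : PEnds V → PEnds W → Prop
  | .edge a b, x => x = .edge (σ a) (σ b) ∨ x = .edge (σ b) (σ a)
  | .semi a, x => x = .semi (σ a)

/-- An isomorphism of pregraphs. -/
structure Iso (P Q : Pregraph) where
  vmap : P.V ≃ Q.V
  emap : P.E ≃ Q.E
  compat : ∀ e, endsRel vmap (P.ends e) (Q.ends (emap e))

/-- Two edge sets (e.g. two 2-factors) of `P` are isomorphic if some automorphism
of `P` maps one onto the other. -/
def FactorIso (P : Pregraph) (F1 F2 : Set P.E) : Prop :=
  ∃ φ : Iso P P, ∀ e, e ∈ F1 ↔ φ.emap e ∈ F2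

/-- Adjacency in the ladder graph `K₂ × Pₙ` on `Fin n × Fin 2`. -/
def ladderAdj (n : ℕ) (p q : Fin n × Fin 2) : Prop :=
  (p.1 = q.1 ∧ p.2 ≠ q.2) ∨ (p.2 = q.2 ∧ ((p.1 : ℕ) + 1 = q.1 ∨ (q.1 : ℕ) + 1 = p.1))

/-- The subgraph of `P` with vertex set `S` and edge set `F` is isomorphic to the
ladder `K₂ × Pₙ` for some `n ≥ 2`. -/
def IsLadder (P : Pregraph) (S : Set P.V) (F : Set P.E) : Prop :=
  ∃ n : ℕ, 2 ≤ n ∧ ∃ f : Fin n × Fin 2 → P.V, Function.Injective f ∧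
    S = Set.range f ∧
    (∀ e ∈ F, ∃ p q, ladderAdj n p q ∧ P.joins e (f p) (f q)) ∧
    (∀ p q, ladderAdj n p q → ∃! e, e ∈ F ∧ P.joins e (f p) (f q))

/-- A ladder of `P`: a maximal subgraph isomorphic to `K₂ × Pₙ`, `n ≥ 2`. -/
def IsMaxLadder (P : Pregraph) (S : Set P.V) (F : Set P.E) : Prop :=
  P.IsLadder S F ∧
  ∀ S' F', P.IsLadder S' F' → S ⊆ S' → F ⊆ F' → S = S' ∧ F = F'

/-- A digon: two distinct vertices joined by two parallel edges. -/
def IsDigonPair (P : Pregraph) (a b : P.V) : Prop :=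
  a ≠ b ∧ ∃ e1 e2 : P.E, e1 ≠ e2 ∧ P.joins e1 a b ∧ P.joins e2 a b

end Pregraph

/-- A pregraph with an edge 2-colouring (colour 0 = factor edges, colour 1 =
other edges). -/
structure CPregraph where
  P : Pregraph
  col : P.E → Fin 2

/-- A colour-preserving isomorphism of 2-edge-coloured pregraphs. -/
structure CIso (X Y : CPregraph) where
  vmap : X.P.V ≃ Y.P.V
  emap : X.P.E ≃ Y.P.E
  compat : ∀ e, Pregraph.endsRel vmap (X.P.ends e) (Y.P.ends (emap e))
  colcompat : ∀ e, Y.col (emap e) = X.col e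

/-- A partial `C₄`-marked pregraph: the colour-0 edges form a `C₄`-quotient
2-factor and every vertex has degree 2 or 3. -/
def IsPartialMarked (X : CPregraph) : Prop :=
  X.P.IsCQFactor {e | X.col e = 0} ∧ ∀ v, X.P.degree v = 2 ∨ X.P.degree v = 3

/-- A deficient vertex: a vertex of degree 2. -/
def Deficient (X : CPregraph) (v : X.P.V) : Prop := X.P.degree v = 2

/-- A set of new (colour-1) edges between deficient vertices, pairwise sharing no
endpoints; each pair `(u, v) ∈ A` represents one new edge joining `u` and `v`. -/
def IsExtSet (X : CPregraph) (A : Set (X.P.V × X.P.V)) : Prop :=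
  (∀ p ∈ A, p.1 ≠ p.2) ∧
  (∀ p ∈ A, Deficient X p.1 ∧ Deficient X p.2) ∧
  (∀ p ∈ A, ∀ q ∈ A, p ≠ q → p.1 ≠ q.1 ∧ p.1 ≠ q.2 ∧ p.2 ≠ q.1 ∧ p.2 ≠ q.2)

/-- The pregraph obtained from `X` by adding the new edges in `A`. -/
noncomputable def extPregraph (X : CPregraph) (A : Set (X.P.V × X.P.V)) : Pregraph :=
  letI : Fintype ↥A := (Set.toFinite A).fintype
  letI : DecidableEq ↥A := Classical.decEq _
  { V := X.P.V
    E := X.P.E ⊕ ↥A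
    ends := Sum.elim X.P.ends (fun p => PEnds.edge p.1.1 p.1.2) }

/-- The coloured pregraph obtained from `X` by adding the new edges in `A`, all
with colour 1: an extension of `X`. -/
noncomputable def extendC (X : CPregraph) (A : Set (X.P.V × X.P.V)) : CPregraph :=
  { P := extPregraph X A
    col := Sum.elim X.col (fun _ => 1) }

/-- `X` is closed: every (colour-preserving) isomorphism between two extensions of
`X` induces an automorphism of `X`. -/
def ClosedMarked (X : CPregraph) : Prop :=
  ∀ A1 A2 : Set (X.P.V × X.P.V), IsExtSet X A1 → IsExtSet X A2 →
    ∀ φ : CIso (extendC X A1) (extendC X A2),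
      ∃ ψ : CIso X X, ψ.vmap = φ.vmap

/-- `O` is an orbit of deficient vertices of `X` under the automorphism group of
`X`. -/
def IsDeficientOrbit (X : CPregraph) (O : Set X.P.V) : Prop :=
  ∃ v0, Deficient X v0 ∧ O = {v | ∃ ψ : CIso X X, ψ.vmap v0 = v}

/-! By closedness of `X`, the vertex map of `φ` is that of an automorphism `ψ` of `X`, so it
preserves the orbit `O`, whose vertices are deficient in `X`. Every edge of `X` at a deficient
vertex lies in the colour-0 2-factor, so a new (colour-1) edge of `A` through a vertex of `O` is
sent to a new edge through a vertex of `O`; as `A` covers `O` and new edges are pairwise disjoint,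
that edge lies in `A`. Hence `φ` permutes `A`, and together with `ψ` on the edges of `X` it is an
automorphism of the extension by `A`. -/

namespace Pregraph

variable {P : Pregraph}

lemma joins.incident_left {e : P.E} {a b : P.V} (h : P.joins e a b) : P.incident e a := by
  rcases h with h | h <;> simp [incident, h]

lemma joins.incident_right {e : P.E} {a b : P.V} (h : P.joins e a b) : P.incident e b := by
  rcases h with h | h <;> simp [incident, h]

lemma incident_of_ends_eq_semi {e : P.E} {a : P.V} (h : P.ends e = .semi a) :
    P.incident e a := by
  simp [incident, h]

lemma one_le_endCount_of_incident {e : P.E} {v : P.V} (h : P.incident e v) :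
    1 ≤ P.endCount v e := by
  unfold incident at h
  unfold endCount
  cases hends : P.ends e with
  | edge a b => rw [hends] at h; rcases h with rfl | rfl <;> simp
  | semi a => rw [hends] at h; simp [h]

lemma three_le_degree {v : P.V} {e₁ e₂ e₃ : P.E} (h₁₂ : e₁ ≠ e₂) (h₁₃ : e₁ ≠ e₃)
    (h₂₃ : e₂ ≠ e₃) (h₁ : P.incident e₁ v) (h₂ : P.incident e₂ v) (h₃ : P.incident e₃ v) :
    3 ≤ P.degree v :=
  calc 3 ≤ ∑ e ∈ ({e₁, e₂, e₃} : Finset P.E), P.endCount v e := by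
        rw [Finset.sum_insert (by simp [h₁₂, h₁₃]), Finset.sum_insert (by simp [h₂₃]),
          Finset.sum_singleton]
        have := one_le_endCount_of_incident h₁
        have := one_le_endCount_of_incident h₂
        have := one_le_endCount_of_incident h₃
        omega
    _ ≤ P.degree v := Finset.sum_le_sum_of_subset (Finset.subset_univ _)

def HasTwoEdgesAt (P : Pregraph) (F : Set P.E) (w : P.V) : Prop :=
  ∃ e₁ e₂ : P.E, e₁ ≠ e₂ ∧ e₁ ∈ F ∧ e₂ ∈ F ∧ P.incident e₁ w ∧ P.incident e₂ w

variable {F : Set P.E} {C : Set P.V} {w : P.V}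

lemma IsQ1Comp.hasTwoEdgesAt (h : P.IsQ1Comp F C) (hw : w ∈ C) : P.HasTwoEdgesAt F w := by
  obtain ⟨a, b, c, d, -, -, -, -, -, -, rfl, e₁, e₂, e₃, e₄, h₁₂, -, h₁₄, h₂₃, -, h₃₄, hF,
    j₁, j₂, j₃, j₄⟩ := h
  have mem : ∀ x ∈ ({e₁, e₂, e₃, e₄} : Set P.E), x ∈ F := fun x hx => (hF.superset hx).1
  rcases hw with rfl | rfl | rfl | rfl
  · exact ⟨e₁, e₄, h₁₄, mem _ (by simp), mem _ (by simp), j₁.incident_left, j₄.incident_right⟩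
  · exact ⟨e₁, e₂, h₁₂, mem _ (by simp), mem _ (by simp), j₁.incident_right, j₂.incident_left⟩
  · exact ⟨e₂, e₃, h₂₃, mem _ (by simp), mem _ (by simp), j₂.incident_right, j₃.incident_left⟩
  · exact ⟨e₃, e₄, h₃₄, mem _ (by simp), mem _ (by simp), j₃.incident_right, j₄.incident_left⟩

lemma IsQ2Comp.hasTwoEdgesAt (h : P.IsQ2Comp F C) (hw : w ∈ C) : P.HasTwoEdgesAt F w := by
  obtain ⟨a, b, -, rfl, e₁, e₂, h₁₂, hF, j₁, j₂⟩ := h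
  have mem : ∀ x ∈ ({e₁, e₂} : Set P.E), x ∈ F := fun x hx => (hF.superset hx).1
  rcases hw with rfl | rfl
  · exact ⟨e₁, e₂, h₁₂, mem _ (by simp), mem _ (by simp), j₁.incident_left, j₂.incident_left⟩
  · exact ⟨e₁, e₂, h₁₂, mem _ (by simp), mem _ (by simp), j₁.incident_right, j₂.incident_right⟩

lemma IsQ3Comp.hasTwoEdgesAt (h : P.IsQ3Comp F C) (hw : w ∈ C) : P.HasTwoEdgesAt F w := by
  obtain ⟨a, b, -, rfl, e₁, e₂, e₃, h₁₂, h₁₃, -, hF, j₁, s₂, s₃⟩ := h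
  have mem : ∀ x ∈ ({e₁, e₂, e₃} : Set P.E), x ∈ F := fun x hx => (hF.superset hx).1
  rcases hw with rfl | rfl
  · exact ⟨e₁, e₂, h₁₂, mem _ (by simp), mem _ (by simp), j₁.incident_left,
      incident_of_ends_eq_semi s₂⟩
  · exact ⟨e₁, e₃, h₁₃, mem _ (by simp), mem _ (by simp), j₁.incident_right,
      incident_of_ends_eq_semi s₃⟩

lemma IsQ4Comp.hasTwoEdgesAt (h : P.IsQ4Comp F C) (hw : w ∈ C) : P.HasTwoEdgesAt F w := by
  obtain ⟨a, rfl, e₁, e₂, h₁₂, hF, s₁, s₂⟩ := h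
  have mem : ∀ x ∈ ({e₁, e₂} : Set P.E), x ∈ F := fun x hx => (hF.superset hx).1
  rcases hw with rfl
  exact ⟨e₁, e₂, h₁₂, mem _ (by simp), mem _ (by simp), incident_of_ends_eq_semi s₁,
    incident_of_ends_eq_semi s₂⟩

lemma IsCQComp.hasTwoEdgesAt (h : P.IsCQComp F C) (hw : w ∈ C) : P.HasTwoEdgesAt F w := by
  rcases h with h | h | h | h
  exacts [h.hasTwoEdgesAt hw, h.hasTwoEdgesAt hw, h.hasTwoEdgesAt hw, h.hasTwoEdgesAt hw]

lemma IsCQFactor.hasTwoEdgesAt (h : P.IsCQFactor F) (w : P.V) : P.HasTwoEdgesAt F w := by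
  obtain ⟨Ps, hcomp, hcover, -⟩ := h
  obtain ⟨C, hC, hwC⟩ := hcover w
  exact (hcomp C hC).hasTwoEdgesAt hwC

end Pregraph

lemma IsPartialMarked.col_eq_zero_of_incident {X : CPregraph} (hX : IsPartialMarked X)
    {w : X.P.V} (hw : Deficient X w) {e : X.P.E} (he : X.P.incident e w) : X.col e = 0 := by
  by_contra hcol
  obtain ⟨e₁, e₂, h₁₂, c₁, c₂, i₁, i₂⟩ := hX.1.hasTwoEdgesAt w
  have := Pregraph.three_le_degree (by rintro rfl; exact hcol c₁) (by rintro rfl; exact hcol c₂)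
    h₁₂ he i₁ i₂
  unfold Deficient at hw
  omega

namespace CIso

variable {X Y Z : CPregraph}

def trans (f : CIso X Y) (g : CIso Y Z) : CIso X Z where
  vmap := f.vmap.trans g.vmap
  emap := f.emap.trans g.emap
  compat e := by
    have h₁ := f.compat e
    have h₂ := g.compat (f.emap e)
    cases hx : X.P.ends e with
    | edge a b =>
      rw [hx] at h₁
      rcases h₁ with h₁ | h₁ <;> rw [h₁] at h₂ <;> rcases h₂ with h₂ | h₂ <;>
        simp [Pregraph.endsRel, h₂]
    | semi a =>
      rw [hx] at h₁
      rw [h₁] at h₂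
      exact h₂
  colcompat e := (g.colcompat _).trans (f.colcompat e)

lemma incident_map (φ : CIso X Y) {e : X.P.E} {v : X.P.V} (h : X.P.incident e v) :
    Y.P.incident (φ.emap e) (φ.vmap v) := by
  have hc := φ.compat e
  unfold Pregraph.incident at h
  split at h <;> rename_i hx <;> rw [hx] at hc
  · rcases hc with hc | hc <;> rcases h with rfl | rfl <;> simp [Pregraph.incident, hc]
  · simp [Pregraph.incident, show Y.P.ends (φ.emap e) = .semi (φ.vmap _) from hc, h]

lemma degree_map (φ : CIso X Y) (v : X.P.V) : Y.P.degree (φ.vmap v) = X.P.degree v := by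
  unfold Pregraph.degree
  rw [← Equiv.sum_comp φ.emap]
  refine Finset.sum_congr rfl fun e _ => ?_
  have hc := φ.compat e
  cases hx : X.P.ends e with
  | edge a b =>
    rw [hx] at hc
    rcases hc with hc | hc <;> simp only [Pregraph.endCount, hx, hc, Equiv.apply_eq_iff_eq]
    omega
  | semi a =>
    rw [hx] at hc
    simp only [Pregraph.endCount, hx, show Y.P.ends (φ.emap e) = .semi (φ.vmap a) from hc,
      Equiv.apply_eq_iff_eq]

end CIso

namespace IsDeficientOrbit

variable {X : CPregraph} {O : Set X.P.V}

lemma deficient (hO : IsDeficientOrbit X O) {v : X.P.V} (hv : v ∈ O) : Deficient X v := by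
  obtain ⟨v₀, hv₀, rfl⟩ := hO
  obtain ⟨χ, rfl⟩ := hv
  exact (χ.degree_map v₀).trans hv₀

lemma vmap_mem (hO : IsDeficientOrbit X O) (ψ : CIso X X) {v : X.P.V} (hv : v ∈ O) :
    ψ.vmap v ∈ O := by
  obtain ⟨v₀, -, rfl⟩ := hO
  obtain ⟨χ, rfl⟩ := hv
  exact ⟨χ.trans ψ, rfl⟩

end IsDeficientOrbit

lemma IsExtSet.eq_of_common_endpoint {X : CPregraph} {A : Set (X.P.V × X.P.V)}
    (hA : IsExtSet X A) {p q : X.P.V × X.P.V} (hp : p ∈ A) (hq : q ∈ A) {w : X.P.V}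
    (hpw : p.1 = w ∨ p.2 = w) (hqw : q.1 = w ∨ q.2 = w) : p = q := by
  by_contra hne
  have := hA.2.2 p hp q hq hne
  rcases hpw with rfl | rfl <;> rcases hqw with h | h <;> tauto

lemma incident_extendC_inl {X : CPregraph} {A : Set (X.P.V × X.P.V)} {e : X.P.E}
    {v : X.P.V} : (extendC X A).P.incident (.inl e) v ↔ X.P.incident e v := by
  unfold Pregraph.incident
  cases h : X.P.ends e <;> simp [extendC, extPregraph, h]

lemma CIso.exists_emap_inr_eq_inr {X : CPregraph} (hX : IsPartialMarked X)
    {A₁ A₂ : Set (X.P.V × X.P.V)} (φ : CIso (extendC X A₁) (extendC X A₂)) (p : A₁)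
    {v : X.P.V} (hv : p.1.1 = v ∨ p.1.2 = v) (hdef : Deficient X (φ.vmap v)) :
    ∃ q : A₂, φ.emap (.inr p) = .inr q ∧ (q.1.1 = φ.vmap v ∨ q.1.2 = φ.vmap v) := by
  have hinc : (extendC X A₂).P.incident (φ.emap (.inr p)) (φ.vmap v) := φ.incident_map hv
  have hcol : (extendC X A₂).col (φ.emap (.inr p)) = 1 := φ.colcompat _
  generalize φ.emap (.inr p) = e at hinc hcol ⊢
  rcases e with e | q
  · have hcol : X.col e = 1 := hcol
    exact absurd (hX.col_eq_zero_of_incident hdef (incident_extendC_inl.mp hinc))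
      (by rw [hcol]; decide)
  · exact ⟨q, rfl, hinc⟩

lemma CIso.exists_restrict_extendC {X : CPregraph} {A A₁ A₂ : Set (X.P.V × X.P.V)}
    (hA₁ : A ⊆ A₁) (hA₂ : A ⊆ A₂) (φ : CIso (extendC X A₁) (extendC X A₂)) (ψ : CIso X X)
    (hψ : ψ.vmap = φ.vmap)
    (hφ : ∀ p : A, ∃ q : A, φ.emap (.inr (Set.inclusion hA₁ p)) = .inr (Set.inclusion hA₂ q)) :
    ∃ χ : CIso (extendC X A) (extendC X A), χ.vmap = φ.vmap := by
  choose f hf using hφ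
  have hinj : Function.Injective f := fun p p' h =>
    Set.inclusion_injective hA₁ (Sum.inr_injective (φ.emap.injective (by rw [hf, hf, h])))
  refine ⟨⟨φ.vmap, Equiv.sumCongr ψ.emap (Equiv.ofBijective f hinj.bijective_of_finite),
    ?_, ?_⟩, rfl⟩
  · rintro (e | p)
    · exact hψ ▸ ψ.compat e
    · have h := φ.compat (.inr (Set.inclusion hA₁ p))
      rw [hf p] at h
      exact h
  · rintro (e | p)
    · exact ψ.colcompat e
    · rfl

theorem extension_closed_general (X : CPregraph) (hX : IsPartialMarked X)
    (hclosed : ClosedMarked X) (O : Set X.P.V) (hO : IsDeficientOrbit X O)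
    (A : Set (X.P.V × X.P.V))
    (hcov : ∀ v ∈ O, ∃ p ∈ A, p.1 = v ∨ p.2 = v)
    (hmeet : ∀ p ∈ A, p.1 ∈ O ∨ p.2 ∈ O) :
    ∀ A1 A2 : Set (X.P.V × X.P.V), IsExtSet X A1 → IsExtSet X A2 →
      A ⊆ A1 → A ⊆ A2 →
      ∀ φ : CIso (extendC X A1) (extendC X A2),
        ∃ ψ : CIso (extendC X A) (extendC X A), ψ.vmap = φ.vmap := by
  intro A1 A2 hA1 hA2 hAA1 hAA2 φ
  obtain ⟨ψ, hψ⟩ := hclosed A1 A2 hA1 hA2 φ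
  refine φ.exists_restrict_extendC hAA1 hAA2 ψ hψ fun ⟨p, hp⟩ => ?_
  obtain ⟨v, hvO, hpv⟩ : ∃ v ∈ O, p.1 = v ∨ p.2 = v := by
    rcases hmeet p hp with h | h
    exacts [⟨_, h, .inl rfl⟩, ⟨_, h, .inr rfl⟩]
  have hw : φ.vmap v ∈ O := hψ ▸ hO.vmap_mem ψ hvO
  obtain ⟨q', hq', hq'w⟩ :=
    φ.exists_emap_inr_eq_inr hX (Set.inclusion hAA1 ⟨p, hp⟩) hpv (hO.deficient hw)
  obtain ⟨q, hqA, hqw⟩ := hcov _ hw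
  exact ⟨⟨q, hqA⟩, hq'.trans
    (congrArg Sum.inr (Subtype.ext (hA2.eq_of_common_endpoint q'.2 (hAA2 hqA) hq'w hqw)))⟩

/-- Let `P` be a closed partial `C₄`-marked pregraph, `O` an orbit
of deficient vertices under `Aut(P)`, and `P'` an extension of `P` (given by the
new edge set `A`) in which no vertex of `O` is deficient and every new edge meets
`O`.  Then `P'` is closed: every isomorphism between two extensions of `P'`
induces an automorphism of `P'`. -/
theorem extension_closed (X : CPregraph) (hX : IsPartialMarked X)
    (hclosed : ClosedMarked X) (O : Set X.P.V) (hO : IsDeficientOrbit X O)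
    (A : Set (X.P.V × X.P.V)) (hA : IsExtSet X A)
    (hcov : ∀ v ∈ O, ∃ p ∈ A, p.1 = v ∨ p.2 = v)
    (hmeet : ∀ p ∈ A, p.1 ∈ O ∨ p.2 ∈ O) :
    ∀ A1 A2 : Set (X.P.V × X.P.V), IsExtSet X A1 → IsExtSet X A2 →
      A ⊆ A1 → A ⊆ A2 →
      ∀ φ : CIso (extendC X A1) (extendC X A2),
        ∃ ψ : CIso (extendC X A) (extendC X A), ψ.vmap = φ.vmap :=
  extension_closed_general X hX hclosed O hO A hcov hmeet
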